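/- Let X be an N×N complex matrix diagonalized as A = S·X·S⁻¹ with A = diag(λ₁,…,λ_N), where the eigenvalues are pairwise distinct, so r_{ij} := λ_i − λ_j ≠ 0 for all i ≠ j. Let Δ be any N×N complex matrix, with Δ₀ and Δ_{(i,j)} defined via B = S·Δ·S⁻¹ as its commuting diagonal component and off-diagonal components. Then the function t ↦ exp(X + t·Δ) (matrix exponential) has derivative at t = 0 equal to exp(X)·Δ₀ + Σ_{i≠j} r_{ij}⁻¹ · (exp(X) − exp(X − r_{ij}·I)) · Δ_{(i,j)}. -/

import Mathlib

open scoped Matrix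
open NormedSpace

attribute [local instance] Matrix.linftyOpNormedAddCommGroup Matrix.linftyOpNormedRing
  Matrix.linftyOpNormedAlgebra Matrix.instCompleteSpace

/-!
Write `D exp(X)` for the Fréchet derivative of `exp` at `X`, so that the derivative in question is
`D exp(X) Δ`, and split `Δ = Δ₀ + ∑ Δ_{(i,j)}`. The part `Δ₀` commutes with `X`, so
`exp (X + tΔ₀) = exp X · exp (tΔ₀)` and `D exp(X) Δ₀ = exp X · Δ₀`. Each `W = Δ_{(i,j)}` satisfies
`XW = λᵢW` and `WX = λⱼW`, hence `W² = 0`, and conjugating by the unit `1 - sW` turns `X` into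
`X + s(λᵢ - λⱼ)W`. Consequently `exp (X + cW) = exp X + c (e^{λᵢ} - e^{λⱼ}) / (λᵢ - λⱼ) · W` is affine
in `c`; as `exp (X - r_{ij}) W = e^{λⱼ} W`, its slope is the `(i,j)` term of the formula.
-/

section Nilpotent

variable {K A : Type*} [CommRing K] [Ring A] [Algebra K A] {x w : A} {a b : K}

theorem mul_self_eq_zero_of_mul_eq_smul {K : Type*} [Field K] [Algebra K A] {a b : K}
    (hab : a ≠ b) (hxw : x * w = a • w) (hwx : w * x = b • w) : w * w = 0 := by
  have h : (a - b) • (w * w) = 0 := by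
    rw [sub_smul, ← mul_smul_comm, ← hxw, ← smul_mul_assoc, ← hwx, mul_assoc, sub_self]
  exact (smul_eq_zero.mp h).resolve_left (sub_ne_zero.mpr hab)

theorem one_sub_smul_mul_one_add_smul (hww : w * w = 0) (s : K) :
    (1 - s • w) * (1 + s • w) = 1 := by
  rw [sub_mul, mul_add, mul_add, smul_mul_smul, hww]
  simp

theorem one_add_smul_mul_one_sub_smul (hww : w * w = 0) (s : K) :
    (1 + s • w) * (1 - s • w) = 1 := by
  rw [add_mul, mul_sub, mul_sub, smul_mul_smul, hww]
  simp

theorem one_sub_smul_mul_mul_one_add_smul (hww : w * w = 0) (hxw : x * w = a • w)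
    (hwx : w * x = b • w) (s : K) :
    (1 - s • w) * x * (1 + s • w) = x + (s * (a - b)) • w := by
  simp only [sub_mul, mul_add, one_mul, mul_one, smul_mul_assoc, mul_smul_comm, hxw, hwx, hww,
    smul_smul, smul_zero]
  module

end Nilpotent

section BanachAlgebra

variable {𝕂 𝔸 : Type*} [RCLike 𝕂] [NormedRing 𝔸] [NormedAlgebra 𝕂 𝔸] [CompleteSpace 𝔸]
  {x w : 𝔸} {a b : 𝕂}

theorem exp_mul_of_mul_eq_smul (h : x * w = a • w) : exp x * w = exp a • w := by
  let +nondep : NormedAlgebra ℚ 𝔸 := .restrictScalars ℚ 𝕂 𝔸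
  have hsemiconj : SemiconjBy w (algebraMap 𝕂 𝔸 a) x := by
    rw [SemiconjBy, ← Algebra.commutes, ← Algebra.smul_def, h]
  rw [← hsemiconj.exp_right, ← algebraMap_exp_comm, ← Algebra.commutes, Algebra.smul_def]

theorem mul_exp_of_mul_eq_smul (h : w * x = b • w) : w * exp x = exp b • w := by
  let +nondep : NormedAlgebra ℚ 𝔸 := .restrictScalars ℚ 𝕂 𝔸
  have hsemiconj : SemiconjBy w x (algebraMap 𝕂 𝔸 b) := by
    rw [SemiconjBy, ← Algebra.smul_def, h]
  rw [hsemiconj.exp_right, ← algebraMap_exp_comm, Algebra.smul_def]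

theorem sub_exp_sub_smul_one_mul_of_mul_eq_smul (h : x * w = a • w) (r : 𝕂) :
    (exp x - exp (x - r • 1)) * w = (exp a - exp (a - r)) • w := by
  have h' : (x - r • 1) * w = (a - r) • w := by
    rw [sub_mul, smul_mul_assoc, one_mul, h, sub_smul]
  rw [sub_mul, exp_mul_of_mul_eq_smul h, exp_mul_of_mul_eq_smul h', sub_smul]

theorem hasDerivAt_exp_add_smul {𝕜 : Type*} [NontriviallyNormedField 𝕜] [NormedAlgebra 𝕜 𝕂]
    [NormedSpace 𝕜 𝔸] [IsScalarTower 𝕜 𝕂 𝔸] (x w : 𝔸) :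
    HasDerivAt (fun t : 𝕜 => exp (x + t • w)) (fderiv 𝕂 exp x w) 0 := by
  have hline : HasDerivAt (fun t : 𝕜 => x + t • w) w 0 := by
    simpa using ((hasDerivAt_id (0 : 𝕜)).smul_const w).const_add x
  have hexp : HasFDerivAt exp (fderiv 𝕂 exp x) (x + (0 : 𝕜) • w) := by
    simpa using (exp_analytic (𝕂 := 𝕂) x).differentiableAt.hasFDerivAt
  exact (hexp.restrictScalars 𝕜).comp_hasDerivAt 0 hline

theorem fderiv_exp_apply_of_commute (h : Commute x w) : fderiv 𝕂 exp x w = exp x * w := by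
  let +nondep : NormedAlgebra ℚ 𝔸 := .restrictScalars ℚ 𝕂 𝔸
  refine (hasDerivAt_exp_add_smul (𝕜 := 𝕂) x w).unique ?_
  have hsplit : (fun t : 𝕂 => exp (x + t • w)) = fun t => exp x * exp (t • w) :=
    funext fun t => exp_add_of_commute (h.smul_right t)
  rw [hsplit]
  simpa using (hasDerivAt_exp_smul_const (𝕂 := 𝕂) w 0).const_mul (exp x)

theorem exp_add_smul_of_mul_eq_smul (hab : a ≠ b) (hxw : x * w = a • w) (hwx : w * x = b • w)
    (c : 𝕂) : exp (x + c • w) = exp x + (c * ((exp a - exp b) / (a - b))) • w := by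
  let +nondep : NormedAlgebra ℚ 𝔸 := .restrictScalars ℚ 𝕂 𝔸
  have hww := mul_self_eq_zero_of_mul_eq_smul hab hxw hwx
  have hab' : a - b ≠ 0 := sub_ne_zero.mpr hab
  set s := c / (a - b)
  let u : 𝔸ˣ := ⟨1 - s • w, 1 + s • w, one_sub_smul_mul_one_add_smul hww s,
    one_add_smul_mul_one_sub_smul hww s⟩
  have hconj : (u : 𝔸) * x * ↑u⁻¹ = x + c • w := by
    rw [Units.val_mk, Units.inv_mk, one_sub_smul_mul_mul_one_add_smul hww hxw hwx,
      div_mul_cancel₀ c hab']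
  rw [← hconj, exp_units_conj, Units.val_mk, Units.inv_mk,
    one_sub_smul_mul_mul_one_add_smul hww (exp_mul_of_mul_eq_smul hxw)
      (mul_exp_of_mul_eq_smul hwx), div_mul_eq_mul_div, mul_div_assoc]

theorem fderiv_exp_apply_of_mul_eq_smul (hab : a ≠ b) (hxw : x * w = a • w)
    (hwx : w * x = b • w) : fderiv 𝕂 exp x w = ((exp a - exp b) / (a - b)) • w := by
  refine (hasDerivAt_exp_add_smul (𝕜 := 𝕂) x w).unique ?_
  rw [funext (exp_add_smul_of_mul_eq_smul hab hxw hwx)]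
  simpa using (((hasDerivAt_id (0 : 𝕂)).mul_const ((exp a - exp b) / (a - b))).smul_const
    w).const_add (exp x)

theorem fderiv_exp_apply_eq_inv_smul_sub_exp_mul (hab : a ≠ b) (hxw : x * w = a • w)
    (hwx : w * x = b • w) :
    fderiv 𝕂 exp x w = (a - b)⁻¹ • ((exp x - exp (x - (a - b) • 1)) * w) := by
  rw [fderiv_exp_apply_of_mul_eq_smul hab hxw hwx, sub_exp_sub_smul_one_mul_of_mul_eq_smul hxw,
    sub_sub_cancel, smul_smul, div_eq_inv_mul]

end BanachAlgebra

namespace Matrix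

variable {n R : Type*} [Fintype n] [DecidableEq n] [CommRing R]

theorem diagonal_mul_single (d : n → R) (i j : n) (c : R) :
    diagonal d * single i j c = d i • single i j c := by
  ext a b
  simp only [diagonal_mul, single_apply, smul_apply, smul_eq_mul, mul_ite, mul_zero]
  split_ifs with h
  · rw [h.1]
  · rfl

theorem single_mul_diagonal (d : n → R) (i j : n) (c : R) :
    single i j c * diagonal d = d j • single i j c := by
  ext a b
  simp only [mul_diagonal, single_apply, smul_apply, smul_eq_mul, mul_ite, mul_zero, ite_mul,
    zero_mul]
  split_ifs with h
  · rw [h.2, mul_comm]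
  · rfl

theorem eq_diagonal_add_sum_single (M : Matrix n n R) :
    M = diagonal (fun i => M i i) +
      ∑ p ∈ Finset.univ.filter (fun p : n × n => p.1 ≠ p.2), single p.1 p.2 (M p.1 p.2) := by
  conv_lhs => rw [matrix_eq_sum_single M, ← Fintype.sum_prod_type',
    ← Finset.sum_filter_add_sum_filter_not Finset.univ (fun p : n × n => p.1 = p.2)]
  rw [← sum_single_eq_diagonal, Finset.sum_filter, Fintype.sum_prod_type]
  simp

theorem nonsing_inv_mul_mul_mul_nonsing_inv_mul_mul {S : Matrix n n R} (hS : IsUnit S.det)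
    (P Q : Matrix n n R) : S⁻¹ * P * S * (S⁻¹ * Q * S) = S⁻¹ * (P * Q) * S := by
  simp only [Matrix.mul_assoc, mul_nonsing_inv_cancel_left (A := S) _ hS]

theorem nonsing_inv_mul_mul_nonsing_inv_mul {S : Matrix n n R} (hS : IsUnit S.det)
    (M : Matrix n n R) : S⁻¹ * (S * M * S⁻¹) * S = M := by
  simp only [Matrix.mul_assoc, nonsing_inv_mul_cancel_left (A := S) _ hS, nonsing_inv_mul S hS,
    Matrix.mul_one]

end Matrix
/-- With `S * X * S⁻¹ = diag(λ₁,…,λ_N)` (pairwise distinct eigenvalues,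
`S` invertible), `Δ` arbitrary, `B = S * Δ * S⁻¹`, `Δ₀ = S⁻¹ * B₀ * S` and
`Δ_{(i,j)} = S⁻¹ * (B i j • E_{ij}) * S`: the map `t ↦ exp (X + t • Δ)` has derivative
at `t = 0` equal to
`exp X * Δ₀ + ∑_{i≠j} r_{ij}⁻¹ • ((exp X − exp (X − r_{ij}•1)) * Δ_{(i,j)})`. -/
theorem hasDerivAt_exp_perturbation_explicit (N : ℕ) (X Δ S : Matrix (Fin N) (Fin N) ℂ)
    (hS : IsUnit S.det) (lam : Fin N → ℂ)
    (hdiag : S * X * S⁻¹ = Matrix.diagonal lam)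
    (hdistinct : ∀ i j : Fin N, i ≠ j → lam i ≠ lam j)
    (r : Fin N → Fin N → ℂ) (hr : ∀ i j, r i j = lam i - lam j)
    (B B₀ Δ₀ : Matrix (Fin N) (Fin N) ℂ)
    (hB : B = S * Δ * S⁻¹)
    (hB₀ : B₀ = Matrix.diagonal (fun i => B i i))
    (hΔ₀ : Δ₀ = S⁻¹ * B₀ * S)
    (Δoff : Fin N → Fin N → Matrix (Fin N) (Fin N) ℂ)
    (hΔoff : ∀ i j, i ≠ j →
      Δoff i j = S⁻¹ * (B i j • Matrix.single i j (1 : ℂ)) * S) :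
    HasDerivAt (fun t : ℝ => exp (X + t • Δ))
      (exp X * Δ₀ +
        ∑ p ∈ Finset.univ.filter (fun p : Fin N × Fin N => p.1 ≠ p.2),
          (r p.1 p.2)⁻¹ •
            ((exp X - exp (X - r p.1 p.2 • (1 : Matrix (Fin N) (Fin N) ℂ))) *
              Δoff p.1 p.2))
      0 := by
  set off := Finset.univ.filter (fun p : Fin N × Fin N => p.1 ≠ p.2)
  have hconj := Matrix.nonsing_inv_mul_mul_mul_nonsing_inv_mul_mul hS
  have hX : X = S⁻¹ * Matrix.diagonal lam * S := by
    rw [← hdiag, Matrix.nonsing_inv_mul_mul_nonsing_inv_mul hS]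
  have hW : ∀ p ∈ off, Δoff p.1 p.2 = S⁻¹ * Matrix.single p.1 p.2 (B p.1 p.2) * S := by
    intro p hp
    rw [hΔoff p.1 p.2 (Finset.mem_filter.mp hp).2, Matrix.smul_single, smul_eq_mul, mul_one]
  have hΔ : Δ = Δ₀ + ∑ p ∈ off, Δoff p.1 p.2 := by
    rw [← Matrix.nonsing_inv_mul_mul_nonsing_inv_mul hS Δ, ← hB,
      Matrix.eq_diagonal_add_sum_single B, Matrix.mul_add, Matrix.add_mul, Matrix.mul_sum,
      Finset.sum_mul, hΔ₀, hB₀, Finset.sum_congr rfl hW]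
  have hcomm : Commute X Δ₀ := by
    rw [hX, hΔ₀, hB₀, Commute, SemiconjBy, hconj, hconj, (Matrix.commute_diagonal _ _).eq]
  have hoff : ∀ p ∈ off, fderiv ℂ exp X (Δoff p.1 p.2) = (r p.1 p.2)⁻¹ •
      ((exp X - exp (X - r p.1 p.2 • (1 : Matrix (Fin N) (Fin N) ℂ))) * Δoff p.1 p.2) := by
    rintro ⟨i, j⟩ hij
    have hXW : X * Δoff i j = lam i • Δoff i j := by
      rw [hW _ hij, hX, hconj, Matrix.diagonal_mul_single, Matrix.mul_smul, Matrix.smul_mul]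
    have hWX : Δoff i j * X = lam j • Δoff i j := by
      rw [hW _ hij, hX, hconj, Matrix.single_mul_diagonal, Matrix.mul_smul, Matrix.smul_mul]
    rw [hr]
    exact fderiv_exp_apply_eq_inv_smul_sub_exp_mul (hdistinct i j (Finset.mem_filter.mp hij).2)
      hXW hWX
  refine (hasDerivAt_exp_add_smul (𝕂 := ℂ) X Δ).congr_deriv ?_
  rw [hΔ, map_add, map_sum]
  exact congr_arg₂ (· + ·) (fderiv_exp_apply_of_commute hcomm) (Finset.sum_congr rfl hoff)
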